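/- Let (X, Y) be a 3-separation of a 3-connected matroid M. If X ∩ cl(Y) ≠ ∅ and X ∩ cl*(Y) ≠ ∅, then |X ∩ cl(Y)| = 1 and |X ∩ cl*(Y)| = 1. -/

import Mathlib

open Set Matroid

variable {α β : Type*}

namespace NDP

/-- The rank of a set `X` in a matroid `M`: the largest cardinality of an
independent subset of `X` (intended for finite matroids). -/
noncomputable def rk (M : Matroid α) (X : Set α) : ℕ :=
  sSup {n : ℕ | ∃ I, M.Indep I ∧ I ⊆ X ∧ I.ncard = n}

/-- The connectivity function `λ_M(X) = r(X) + r(E − X) − r(M)`, valued in `ℤ`. -/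
noncomputable def lam (M : Matroid α) (X : Set α) : ℤ :=
  (rk M X : ℤ) + (rk M (M.E \ X) : ℤ) - (rk M M.E : ℤ)

/-- Deletion of a set of elements. -/
def delete (M : Matroid α) (D : Set α) : Matroid α := M ↾ (M.E \ D)

/-- Contraction of a set of elements, defined by duality. -/
def contract (M : Matroid α) (C : Set α) : Matroid α := (delete M✶ C)✶

/-- `X` is a `k`-separating set of `M`. -/
def Separating (M : Matroid α) (k : ℕ) (X : Set α) : Prop :=
  X ⊆ M.E ∧ lam M X ≤ (k : ℤ) - 1

/-- `X` is exactly `k`-separating in `M`. -/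
def ExactlySeparating (M : Matroid α) (k : ℕ) (X : Set α) : Prop :=
  X ⊆ M.E ∧ lam M X = (k : ℤ) - 1

/-- `(X, M.E \ X)` is a `k`-separation of `M`. -/
def IsKSeparation (M : Matroid α) (k : ℕ) (X : Set α) : Prop :=
  Separating M k X ∧ k ≤ X.ncard ∧ k ≤ (M.E \ X).ncard

/-- A matroid is connected if it has no 1-separations. -/
def Connected (M : Matroid α) : Prop := ∀ X, ¬ IsKSeparation M 1 X

/-- A matroid is 3-connected if it has no k-separations for k < 3. -/
def ThreeConnected (M : Matroid α) : Prop := ∀ k < 3, ∀ X, ¬ IsKSeparation M k X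

/-- A circuit: a minimal dependent set. -/
def Circuit (M : Matroid α) (C : Set α) : Prop :=
  C ⊆ M.E ∧ ¬ M.Indep C ∧ ∀ D, D ⊂ C → M.Indep D

def Cocircuit (M : Matroid α) (C : Set α) : Prop := Circuit M✶ C

def Triangle (M : Matroid α) (T : Set α) : Prop := Circuit M T ∧ T.ncard = 3

def Triad (M : Matroid α) (T : Set α) : Prop := Cocircuit M T ∧ T.ncard = 3

/-- `N` is a minor of `M`. -/
def Minor (N M : Matroid α) : Prop := ∃ C D, N = delete (contract M C) D

/-- `M` has a minor isomorphic to `N`. -/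
def IsoMinor (M : Matroid α) (N : Matroid β) : Prop :=
  ∃ (f : β → α) (hf : Set.InjOn f N.E), Minor (N.map f hf) M

/-- `X` is a set of representatives for the simplification of `M`:
one non-loop element from each parallel class. -/
def SimpRep (M : Matroid α) (X : Set α) : Prop :=
  X ⊆ M.E ∧ (∀ e ∈ X, M.Indep {e}) ∧
  (∀ e ∈ M.E, M.Indep {e} → ∃ f ∈ X, f ∈ M.closure {e}) ∧
  (∀ f ∈ X, ∀ g ∈ X, f ∈ M.closure {g} → f = g)

/-- `si M` (the simplification of `M`) is a 3-connected matroid. -/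
def SiThreeConnected (M : Matroid α) : Prop :=
  ∀ X, SimpRep M X → ThreeConnected (M ↾ X)

/-- `co M` (the cosimplification of `M`) is a 3-connected matroid. -/
def CoThreeConnected (M : Matroid α) : Prop := SiThreeConnected M✶

/-- The restriction of `M` to `P` is isomorphic to the rank-`r` uniform matroid on `P`. -/
def UnifRestr (M : Matroid α) (r : ℕ) (P : Set α) : Prop :=
  P ⊆ M.E ∧ ∀ X ⊆ P, (M.Indep X ↔ X.ncard ≤ r)

/-- A set is fully closed if it is closed in `M` and in `M✶`. -/
def FullClosed (M : Matroid α) (F : Set α) : Prop :=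
  M.closure F = F ∧ M✶.closure F = F

/-- The full closure of `X`: the intersection of all fully closed sets containing `X`. -/
def fcl (M : Matroid α) (X : Set α) : Set α :=
  ⋂₀ {F | X ⊆ F ∧ FullClosed M F}

/-- `(X, {z}, Y)` is a vertical 3-separation of `M`. -/
def VertThreeSep (M : Matroid α) (X : Set α) (z : α) (Y : Set α) : Prop :=
  X ∪ {z} ∪ Y = M.E ∧ Disjoint X Y ∧ z ∉ X ∧ z ∉ Y ∧
  IsKSeparation M 3 (X ∪ {z}) ∧ 3 ≤ rk M (X ∪ {z}) ∧ 3 ≤ rk M Y ∧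
  IsKSeparation M 3 X ∧ 3 ≤ rk M X ∧ 3 ≤ rk M (Y ∪ {z}) ∧
  z ∈ M.closure X ∧ z ∈ M.closure Y

/-- `M` is a wheel or a whirl: its ground set has a cyclic ordering of alternating
spokes and rims in which consecutive triples are alternately triangles and triads. -/
def IsWheelOrWhirl (M : Matroid α) : Prop :=
  ∃ (n : ℕ) (s r : ZMod n → α), 2 ≤ n ∧
    Function.Injective (fun p : ZMod n × Bool => if p.2 then s p.1 else r p.1) ∧
    Set.range s ∪ Set.range r = M.E ∧
    ∀ i : ZMod n, Triangle M {s i, r i, s (i + 1)} ∧ Triad M {r i, s (i + 1), r (i + 1)}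

/-- `f` (restricted to `{0, …, k−1}`) is a fan ordering of length `k` in `M`. -/
def IsFanOrd (M : Matroid α) (k : ℕ) (f : ℕ → α) : Prop :=
  3 ≤ k ∧ Set.InjOn f (Set.Iio k) ∧ (∀ i < k, f i ∈ M.E) ∧
  (Triangle M {f 0, f 1, f 2} ∨ Triad M {f 0, f 1, f 2}) ∧
  ∀ i, i + 3 < k →
    (Triangle M {f i, f (i+1), f (i+2)} → Triad M {f (i+1), f (i+2), f (i+3)}) ∧
    (Triad M {f i, f (i+1), f (i+2)} → Triangle M {f (i+1), f (i+2), f (i+3)})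

/-- `F` is a fan of `M`. -/
def IsFan (M : Matroid α) (F : Set α) : Prop :=
  ∃ k f, IsFanOrd M k f ∧ F = f '' Set.Iio k

/-- `F` is a maximal fan of `M`. -/
def IsMaximalFan (M : Matroid α) (F : Set α) : Prop :=
  IsFan M F ∧ ∀ F', IsFan M F' → F ⊆ F' → F' = F

end NDP

/-! If `c ∈ X ∩ cl*(Y)`, then `c` is a coloop of `M | X`, so `r(X - c) = r(X) - 1`; it cannot
also lie in `cl(Y)`, for then `X - c` would be 2-separating. If `a ≠ b` both lie in `X ∩ cl(Y)`,
then `r {a, b} = 2` by 3-connectivity, and submodularity applied to `X - c` and `Y ∪ {a, b}` gives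
`r(E - c) < r(M)`, so `{c}` is 1-separating. The statement for `cl*` is the dual one. -/

namespace NDP

variable {M : Matroid α} {X Y Z : Set α} {c : α}

lemma sdiff_sdiff_singleton_of_mem {E : Set α} (hc : c ∈ E) (X : Set α) :
    E \ (X \ {c}) = insert c (E \ X) := by
  rw [sdiff_sdiff_right, inter_singleton_of_mem hc, union_singleton]

lemma cast_rk [M.RankFinite] (X : Set α) : (rk M X : ℕ∞) = M.eRk X := by
  obtain ⟨I, hI⟩ := M.exists_isBasis' X
  have hmax : IsGreatest {n : ℕ | ∃ J, M.Indep J ∧ J ⊆ X ∧ J.ncard = n} I.ncard := by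
    refine ⟨⟨I, hI.indep, hI.subset, rfl⟩, ?_⟩
    rintro _ ⟨J, hJ, hJX, rfl⟩
    have hle := hJ.encard_le_eRk_of_subset hJX
    rwa [← hI.encard_eq_eRk, ← hJ.finite.cast_ncard_eq, ← hI.indep.finite.cast_ncard_eq,
      Nat.cast_le] at hle
  rw [rk, hmax.csSup_eq, hI.indep.finite.cast_ncard_eq, hI.encard_eq_eRk]

lemma rk_mono [M.RankFinite] (h : X ⊆ Y) : rk M X ≤ rk M Y := by
  have hle := M.eRk_mono h
  rwa [← cast_rk, ← cast_rk, Nat.cast_le] at hle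

lemma rk_empty (M : Matroid α) [M.RankFinite] : rk M ∅ = 0 := by
  rw [← Nat.cast_inj (R := ℕ∞), cast_rk, eRk_empty, Nat.cast_zero]

lemma rk_singleton_le [M.RankFinite] (c : α) : rk M {c} ≤ 1 := by
  have hle := M.eRk_singleton_le c
  rwa [← cast_rk, Nat.cast_le_one] at hle

lemma rk_inter_add_rk_union_le [M.RankFinite] (X Y : Set α) :
    rk M (X ∩ Y) + rk M (X ∪ Y) ≤ rk M X + rk M Y := by
  have hle := M.eRk_inter_add_eRk_union_le X Y
  simp only [← cast_rk] at hle
  exact_mod_cast hle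

lemma rk_union_of_subset_closure [M.RankFinite] (hZ : Z ⊆ M.closure Y) :
    rk M (Y ∪ Z) = rk M Y := by
  have heq : M.eRk (Y ∪ Z) = M.eRk Y := by
    refine le_antisymm ?_ (M.eRk_mono subset_union_left)
    calc M.eRk (Y ∪ Z) ≤ M.eRk (Y ∪ M.closure Y) := M.eRk_mono (union_subset_union_right Y hZ)
      _ = M.eRk Y := by rw [eRk_union_closure_right_eq, union_self]
  exact_mod_cast (cast_rk (M := M) _).trans (heq.trans (cast_rk Y).symm)

lemma rk_dual_add_rk_ground [M.Finite] (hX : X ⊆ M.E) :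
    rk M✶ X + rk M M.E = rk M (M.E \ X) + X.ncard := by
  have heq := M.eRk_dual_add_eRank X hX
  rw [eRank_def, ← cast_rk, ← cast_rk, ← cast_rk,
    ← (M.ground_finite.subset hX).cast_ncard_eq] at heq
  exact_mod_cast heq

lemma rk_sdiff_singleton_add_one [M.Finite] (hX : X ⊆ M.E) (hcX : c ∈ X)
    (hc : c ∈ M✶.closure (M.E \ X)) : rk M (X \ {c}) + 1 = rk M X := by
  have hYc : rk M✶ (insert c (M.E \ X)) = rk M✶ (M.E \ X) := by
    rw [← union_singleton]
    exact rk_union_of_subset_closure (singleton_subset_iff.2 hc)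
  have h1 := rk_dual_add_rk_ground (M := M) (insert_subset (hX hcX) (sdiff_subset (t := X)))
  have h2 := rk_dual_add_rk_ground (M := M) (sdiff_subset : M.E \ X ⊆ M.E)
  rw [← sdiff_sdiff_singleton_of_mem (hX hcX), sdiff_sdiff_cancel_left (sdiff_subset.trans hX),
    sdiff_sdiff_singleton_of_mem (hX hcX),
    ncard_insert_of_notMem (fun h => h.2 hcX) M.ground_finite.sdiff] at h1
  rw [sdiff_sdiff_cancel_left hX] at h2
  omega

lemma lam_le_rk [M.RankFinite] (X : Set α) : lam M X ≤ rk M X := by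
  have := rk_mono (M := M) (sdiff_subset : M.E \ X ⊆ M.E)
  unfold lam
  omega

lemma lam_sdiff_singleton_add_one [M.Finite] (hX : X ⊆ M.E) (hcX : c ∈ X)
    (hcl : c ∈ M.closure (M.E \ X)) (hcl' : c ∈ M✶.closure (M.E \ X)) :
    lam M (X \ {c}) + 1 = lam M X := by
  have hY : rk M (insert c (M.E \ X)) = rk M (M.E \ X) := by
    rw [← union_singleton]
    exact rk_union_of_subset_closure (singleton_subset_iff.2 hcl)
  have hX' := rk_sdiff_singleton_add_one hX hcX hcl'
  unfold lam
  rw [sdiff_sdiff_singleton_of_mem (hX hcX), hY]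
  omega

lemma lam_dual [M.Finite] (hX : X ⊆ M.E) : lam M✶ X = lam M X := by
  have h1 := rk_dual_add_rk_ground hX
  have h2 := rk_dual_add_rk_ground (M := M) (sdiff_subset : M.E \ X ⊆ M.E)
  have h3 := rk_dual_add_rk_ground (M := M) subset_rfl
  have hcard := ncard_sdiff_add_ncard_of_subset hX M.ground_finite
  rw [sdiff_sdiff_cancel_left hX] at h2
  rw [sdiff_self, rk_empty] at h3
  unfold lam
  rw [dual_ground]
  omega

lemma IsKSeparation.dual [M.Finite] {k : ℕ} (h : IsKSeparation M k X) :
    IsKSeparation M✶ k X := by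
  obtain ⟨⟨hXE, hlam⟩, hkX, hkY⟩ := h
  exact ⟨⟨hXE, (lam_dual hXE).trans_le hlam⟩, hkX, hkY⟩

lemma ThreeConnected.dual [M.Finite] (hM : ThreeConnected M) : ThreeConnected M✶ :=
  fun k hk X hX => hM k hk X (M.dual_dual ▸ hX.dual)

lemma ThreeConnected.le_lam (hM : ThreeConnected M) {k : ℕ} (hk : k < 3) (hX : X ⊆ M.E)
    (hkX : k ≤ X.ncard) (hkY : k ≤ (M.E \ X).ncard) : (k : ℤ) ≤ lam M X := by
  by_contra h
  exact hM k hk X ⟨⟨hX, by omega⟩, hkX, hkY⟩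

lemma ThreeConnected.notMem_closure_of_mem_dual_closure [M.Finite] (hM : ThreeConnected M)
    (hX : IsKSeparation M 3 X) (hcX : c ∈ X) (hc : c ∈ M✶.closure (M.E \ X)) :
    c ∉ M.closure (M.E \ X) := by
  obtain ⟨⟨hXE, hlam⟩, hX3, hY3⟩ := hX
  intro hcl
  have hlam' := lam_sdiff_singleton_add_one hXE hcX hcl hc
  have hcard := ncard_sdiff_singleton_add_one hcX (M.ground_finite.subset hXE)
  have hcard' : (M.E \ (X \ {c})).ncard = (M.E \ X).ncard + 1 := by
    rw [sdiff_sdiff_singleton_of_mem (hXE hcX),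
      ncard_insert_of_notMem (fun h => h.2 hcX) M.ground_finite.sdiff]
  have hsep := hM.le_lam (k := 2) (by norm_num) ((sdiff_subset (t := {c})).trans hXE)
    (by omega) (by omega)
  push_cast at hlam hsep
  omega

lemma ThreeConnected.inter_closure_compl_subsingleton [M.Finite] (hM : ThreeConnected M)
    (hX : IsKSeparation M 3 X) (hcX : c ∈ X) (hc : c ∈ M✶.closure (M.E \ X)) :
    (X ∩ M.closure (M.E \ X)).Subsingleton := by
  have hcl := hM.notMem_closure_of_mem_dual_closure hX hcX hc
  obtain ⟨⟨hXE, hlam⟩, hX3, hY3⟩ := hX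
  rintro a ⟨haX, ha⟩ b ⟨hbX, hb⟩
  by_contra hab
  have hac : a ≠ c := by rintro rfl; exact hcl ha
  have hbc : b ≠ c := by rintro rfl; exact hcl hb
  have hab2 : 2 ≤ rk M {a, b} := by
    have hsep := hM.le_lam (k := 2) (by norm_num) (pair_subset (hXE haX) (hXE hbX))
      (by rw [ncard_pair hab]) ((hY3.trans' (by norm_num)).trans
        (ncard_le_ncard (sdiff_subset_sdiff_right (pair_subset haX hbX)) M.ground_finite.sdiff))
    have := lam_le_rk (M := M) {a, b}
    omega
  have hsubmod :
      rk M (M.E \ {c}) + rk M {a, b} ≤ rk M (X \ {c}) + rk M (M.E \ X ∪ {a, b}) := by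
    refine le_trans ?_ (rk_inter_add_rk_union_le _ _)
    rw [add_comm]
    refine add_le_add (rk_mono (pair_subset ⟨⟨haX, hac⟩, .inr (.inl rfl)⟩
      ⟨⟨hbX, hbc⟩, .inr (.inr rfl)⟩)) (rk_mono fun x ⟨hxE, hxc⟩ => ?_)
    by_cases hxX : x ∈ X
    exacts [.inl ⟨hxX, hxc⟩, .inr (.inl ⟨hxE, hxX⟩)]
  rw [rk_union_of_subset_closure (pair_subset ha hb)] at hsubmod
  have hXc := rk_sdiff_singleton_add_one hXE hcX hc
  have hc1 := rk_singleton_le (M := M) c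
  have hsep := hM.le_lam (k := 1) (by norm_num) (singleton_subset_iff.2 (hXE hcX)) (by simp)
    ((hY3.trans' (by norm_num)).trans
      (ncard_le_ncard (sdiff_subset_sdiff_right (singleton_subset_iff.2 hcX))
        M.ground_finite.sdiff))
  unfold lam at hlam hsep
  push_cast at hlam hsep
  omega

end NDP

/-- If `(X, Y)` is a 3-separation of a 3-connected matroid and both
`X ∩ cl(Y)` and `X ∩ cl*(Y)` are nonempty, then each has exactly one element. -/
theorem stmt9 (M : Matroid α) [M.Finite] (hM : NDP.ThreeConnected M)
    (X Y : Set α) (hsep : NDP.IsKSeparation M 3 X) (hY : Y = M.E \ X)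
    (h1 : (X ∩ M.closure Y).Nonempty) (h2 : (X ∩ M✶.closure Y).Nonempty) :
    (X ∩ M.closure Y).ncard = 1 ∧ (X ∩ M✶.closure Y).ncard = 1 := by
  subst hY
  obtain ⟨a, haX, ha⟩ := h1
  obtain ⟨c, hcX, hc⟩ := h2
  have hsub := hM.inter_closure_compl_subsingleton hsep hcX hc
  have hsub' : (X ∩ M✶.closure (M.E \ X)).Subsingleton := by
    simpa using hM.dual.inter_closure_compl_subsingleton hsep.dual haX (by simpa using ha)
  exact ⟨ncard_eq_one.2 ⟨a, hsub.eq_singleton_of_mem ⟨haX, ha⟩⟩,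
    ncard_eq_one.2 ⟨c, hsub'.eq_singleton_of_mem ⟨hcX, hc⟩⟩⟩
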